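/- arXiv:2008.06801 — 8 statements merged into one kernel-verified Lean document; each statement's English description precedes it below -/
import Mathlib

section
/- Let R be a commutative ring and n : ℕ. If P and Q in MvPolynomial (Fin n) R are both multilinear and eval at every 0/1 point agree (i.e., for every b : Fin n → Bool, evaluating P and Q at the point (fun i => if b i then (1:R) else 0) gives the same value), then P = Q. -/
/-!
A nonzero multilinear polynomial has a `≤`-minimal exponent `m` in its support. Evaluating at
the 0/1 indicator of `m.support` kills every monomial whose support is not contained in
`m.support`; for multilinear exponents containment of supports means `≤`, so by minimality the
value is the coefficient of `m`, which is nonzero.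
-/

open MvPolynomial

/-- A multivariate polynomial is multilinear if every monomial in its support
has exponent at most 1 in each variable. -/
def Multilinear {R : Type*} [CommRing R] {n : ℕ} (P : MvPolynomial (Fin n) R) : Prop :=
  ∀ m ∈ P.support, ∀ i : Fin n, m i ≤ 1

theorem Finsupp.le_of_support_subset_of_le_one {σ : Type*} {d m : σ →₀ ℕ}
    (hd : ∀ i, d i ≤ 1) (h : d.support ⊆ m.support) : d ≤ m := by
  intro i
  by_cases hi : i ∈ d.support
  · have hm : m i ≠ 0 := Finsupp.mem_support_iff.1 (h hi)
    have hd1 : d i ≤ 1 := hd i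
    omega
  · simp [Finsupp.notMem_support_iff.1 hi]

namespace MvPolynomial

variable {R σ : Type*} [CommSemiring R]

theorem prod_ite_mem_pow_support [DecidableEq σ] (s : Finset σ) (d : σ →₀ ℕ) :
    ∏ i ∈ d.support, (if i ∈ s then (1 : R) else 0) ^ d i =
      if d.support ⊆ s then 1 else 0 := by
  split_ifs with hds
  · exact Finset.prod_eq_one fun i hi => by rw [if_pos (hds hi), one_pow]
  · obtain ⟨i, hid, his⟩ := Finset.not_subset.1 hds
    exact Finset.prod_eq_zero hid (by rw [if_neg his, zero_pow (Finsupp.mem_support_iff.1 hid)])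

theorem eval_ite_mem_support_of_minimal [DecidableEq σ] {P : MvPolynomial σ R}
    (hP : P ∈ restrictDegree σ R 1) {m : σ →₀ ℕ} (hm : Minimal (· ∈ P.support) m) :
    eval (fun i => if i ∈ m.support then 1 else 0) P = coeff m P := by
  rw [eval_eq, Finset.sum_eq_single_of_mem m hm.prop]
  · rw [prod_ite_mem_pow_support, if_pos subset_rfl, mul_one]
  · intro d hd hdm
    rw [prod_ite_mem_pow_support, if_neg, mul_zero]
    intro hsub
    have hle := Finsupp.le_of_support_subset_of_le_one ((mem_restrictDegree _ P 1).1 hP d hd) hsub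
    exact hdm (hm.eq_of_le hd hle)

theorem eq_zero_of_eval_boolean_eq_zero {P : MvPolynomial σ R} (hP : P ∈ restrictDegree σ R 1)
    (h : ∀ b : σ → Bool, eval (fun i => if b i then (1 : R) else 0) P = 0) : P = 0 := by
  classical
  by_contra hP0
  obtain ⟨m, hm⟩ := exists_minimal_of_wellFoundedLT (· ∈ P.support) (support_nonempty.2 hP0)
  have hcoeff : coeff m P = 0 := by
    simpa only [decide_eq_true_eq, eval_ite_mem_support_of_minimal hP hm] using
      h (fun i => decide (i ∈ m.support))
  exact mem_support_iff.1 hm.prop hcoeff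

end MvPolynomial

theorem multilinear_eq_of_eval_boolean_eq (R : Type*) [CommRing R] (n : ℕ)
    (P Q : MvPolynomial (Fin n) R) (hP : Multilinear P) (hQ : Multilinear Q)
    (h : ∀ b : Fin n → Bool,
      MvPolynomial.eval (fun i => if b i then (1 : R) else 0) P =
      MvPolynomial.eval (fun i => if b i then (1 : R) else 0) Q) :
    P = Q := by
  have hPQ : P - Q ∈ restrictDegree (Fin n) R 1 :=
    sub_mem ((mem_restrictDegree _ P 1).2 hP) ((mem_restrictDegree _ Q 1).2 hQ)
  refine sub_eq_zero.1 (eq_zero_of_eval_boolean_eq_zero hPQ fun b => ?_)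
  rw [map_sub, h b, sub_self]
end

section
/- Let R be a commutative ring and n : ℕ. For every P in MvPolynomial (Fin n) R there exists a unique multilinear polynomial Q in MvPolynomial (Fin n) R such that P - Q lies in the ideal I generated by {X i ^ 2 - X i : i ∈ Fin n}. -/
open MvPolynomial

/-!
Modulo `X i ^ 2 - X i` every variable is idempotent, so each monomial `X ^ m` is congruent to
the monomial with all exponents capped at `1`; capping the exponents of `P` termwise gives a
multilinear representative. For uniqueness, a nonzero multilinear `q` in the ideal has a minimal
exponent vector `m` in its support. Evaluating `q` at the `0/1`-indicator of `m.support` kills the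
ideal, while for multilinear `q` the only surviving monomial is `X ^ m`, so `coeff m q = 0`.
-/

namespace MvPolynomial

variable {σ R : Type*} [CommRing R]

noncomputable def booleanIdeal (σ R : Type*) [CommRing R] : Ideal (MvPolynomial σ R) :=
  Ideal.span (Set.range fun i : σ => (X i : MvPolynomial σ R) ^ 2 - X i)

theorem booleanIdeal_le_ker_eval {x : σ → R} (hx : ∀ i, IsIdempotentElem (x i)) :
    booleanIdeal σ R ≤ RingHom.ker (eval x) := by
  rw [booleanIdeal, Ideal.span_le]
  rintro _ ⟨i, rfl⟩
  simp [sq, (hx i).eq]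

theorem eval_indicator [DecidableEq σ] (S : Finset σ) (q : MvPolynomial σ R) :
    eval (fun i => if i ∈ S then 1 else 0) q = ∑ m ∈ q.support with m.support ⊆ S, q.coeff m := by
  rw [eval_eq, Finset.sum_filter]
  refine Finset.sum_congr rfl fun m _ => ?_
  have hprod : ∏ i ∈ m.support, (if i ∈ S then (1 : R) else 0) ^ m i =
      if m.support ⊆ S then 1 else 0 := by
    rw [if_congr Finset.subset_iff rfl rfl, ← Finset.prod_boole]
    refine Finset.prod_congr rfl fun i hi => ?_
    rw [ite_pow, one_pow, zero_pow (Finsupp.mem_support_iff.mp hi)]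
  rw [hprod, mul_boole]

theorem isIdempotentElem_mk_X (i : σ) :
    IsIdempotentElem (Ideal.Quotient.mk (booleanIdeal σ R) (X i)) := by
  have hmem : X i ^ 2 - X i ∈ booleanIdeal σ R := Ideal.subset_span ⟨i, rfl⟩
  rw [IsIdempotentElem, ← map_mul, ← sq, Ideal.Quotient.eq]
  exact hmem

theorem mk_monomial_eq_mk_monomial_mapRange_min (m : σ →₀ ℕ) (c : R) :
    Ideal.Quotient.mk (booleanIdeal σ R) (monomial m c) =
      Ideal.Quotient.mk (booleanIdeal σ R) (monomial (m.mapRange (min · 1) rfl) c) := by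
  have hpow : ∀ i e, Ideal.Quotient.mk (booleanIdeal σ R) (X i ^ e) =
      Ideal.Quotient.mk (booleanIdeal σ R) (X i ^ min e 1) := by
    rintro i (_ | e)
    · rfl
    · rw [map_pow, map_pow, min_eq_right (by omega), pow_one]
      exact (isIdempotentElem_mk_X i).pow_succ_eq e
  rw [monomial_eq, monomial_eq, Finsupp.prod_mapRange_index fun _ => pow_zero _, map_mul, map_mul,
    Finsupp.prod, Finsupp.prod, map_prod, map_prod]
  exact congrArg _ (Finset.prod_congr rfl fun i _ => hpow i (m i))

noncomputable def multilinearize (P : MvPolynomial σ R) : MvPolynomial σ R :=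
  ∑ m ∈ P.support, monomial (m.mapRange (min · 1) rfl) (P.coeff m)

theorem sub_multilinearize_mem_booleanIdeal (P : MvPolynomial σ R) :
    P - multilinearize P ∈ booleanIdeal σ R := by
  rw [← Ideal.Quotient.eq, multilinearize, map_sum]
  conv_lhs => rw [P.as_sum, map_sum]
  exact Finset.sum_congr rfl fun m _ => mk_monomial_eq_mk_monomial_mapRange_min m _

end MvPolynomial

theorem Finsupp.le_of_support_subset_of_le_one_s2 {σ : Type*} {a b : σ →₀ ℕ} (ha : ∀ i, a i ≤ 1)
    (h : a.support ⊆ b.support) : a ≤ b :=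
  (Finsupp.le_iff a b).mpr fun i hi =>
    (ha i).trans (Nat.one_le_iff_ne_zero.mpr (Finsupp.mem_support_iff.mp (h hi)))

section Multilinear

variable {R : Type*} [CommRing R] {n : ℕ}

theorem multilinear_multilinearize (P : MvPolynomial (Fin n) R) : Multilinear (multilinearize P) := by
  classical
  intro m hm i
  obtain ⟨m', -, hm'⟩ := Finset.mem_biUnion.mp (support_sum hm)
  rw [Finset.mem_singleton.mp (support_monomial_subset hm')]
  exact min_le_right _ _

theorem Multilinear.sub {p q : MvPolynomial (Fin n) R} (hp : Multilinear p) (hq : Multilinear q) :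
    Multilinear (p - q) := by
  classical
  intro m hm
  rcases Finset.mem_union.mp (support_sub _ p q hm) with h | h
  exacts [hp m h, hq m h]

theorem Multilinear.eq_zero_of_mem_booleanIdeal {q : MvPolynomial (Fin n) R} (hq : Multilinear q)
    (hI : q ∈ booleanIdeal (Fin n) R) : q = 0 := by
  by_contra h0
  obtain ⟨m, hm⟩ := Finset.exists_minimal (support_nonempty.mpr h0)
  have hfilter : {m' ∈ q.support | m'.support ⊆ m.support} = {m} := by
    ext m'
    simp only [Finset.mem_filter, Finset.mem_singleton]
    constructor
    · rintro ⟨hm', hsub⟩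
      exact hm.eq_of_le hm' (Finsupp.le_of_support_subset_of_le_one_s2 (hq m' hm') hsub)
    · rintro rfl
      exact ⟨hm.prop, subset_rfl⟩
  have hx : ∀ i, IsIdempotentElem (if i ∈ m.support then (1 : R) else 0) := fun i => by
    split_ifs
    exacts [IsIdempotentElem.one, IsIdempotentElem.zero]
  have heval := booleanIdeal_le_ker_eval hx hI
  rw [RingHom.mem_ker, eval_indicator, hfilter, Finset.sum_singleton] at heval
  exact mem_support_iff.mp hm.prop heval

end Multilinear

theorem exists_unique_multilinear_representative (R : Type*) [CommRing R] (n : ℕ)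
    (P : MvPolynomial (Fin n) R) :
    ∃! Q : MvPolynomial (Fin n) R, Multilinear Q ∧
      P - Q ∈ Ideal.span (Set.range fun i : Fin n =>
        (X i : MvPolynomial (Fin n) R) ^ 2 - X i) := by
  have hP := sub_multilinearize_mem_booleanIdeal P
  refine ⟨multilinearize P, ⟨multilinear_multilinearize P, hP⟩, ?_⟩
  rintro Q ⟨hQ, hPQ⟩
  have hdiff : Q - multilinearize P ∈ booleanIdeal (Fin n) R := by
    simpa using sub_mem hP hPQ
  exact sub_eq_zero.mp ((hQ.sub (multilinear_multilinearize P)).eq_zero_of_mem_booleanIdeal hdiff)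
end

section
/- Let R be a commutative ring, n : ℕ, and let P in MvPolynomial (Fin n) R be multilinear. Then for every T : Finset (Fin n), applying the partial derivative operators pderiv i for all i ∈ T to P (in any order) and then evaluating at the zero point yields the coefficient in P of the squarefree monomial ∏_{i ∈ T} X i. -/
open MvPolynomial

/- Each `pderiv i` shifts the coefficient index by `single i 1` at the cost of a factor `m i + 1`,
which is `1` as long as `i` is absent from the index; distinct variables keep it absent. -/

theorem coeff_foldr_pderiv {R σ : Type*} [CommSemiring R] (l : List σ) (hnd : l.Nodup)
    (m : σ →₀ ℕ) (hm : ∀ i ∈ l, m i = 0) (P : MvPolynomial σ R) :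
    coeff m (l.foldr (fun i Q => pderiv i Q) P)
      = coeff (m + (l.map fun i => Finsupp.single i 1).sum) P := by
  induction l generalizing m with
  | nil => simp
  | cons i t ih =>
    obtain ⟨hit, htnd⟩ := List.nodup_cons.mp hnd
    have hm' : ∀ j ∈ t, (m + Finsupp.single i 1 : σ →₀ ℕ) j = 0 := fun j hj => by
      have hij : i ≠ j := fun h => hit (h ▸ hj)
      simp [hm j (List.mem_cons_of_mem i hj), hij]
    rw [List.foldr_cons, coeff_pderiv, hm i List.mem_cons_self, ih htnd _ hm', List.map_cons,
      List.sum_cons, add_assoc]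
    simp

theorem pderiv_eval_zero_eq_coeff_general (R : Type*) [CommRing R] (n : ℕ)
    (P : MvPolynomial (Fin n) R) (T : Finset (Fin n))
    (l : List (Fin n)) (hnd : l.Nodup) (hl : l.toFinset = T) :
    MvPolynomial.eval (fun _ => (0 : R))
        (l.foldr (fun i Q => MvPolynomial.pderiv i Q) P)
      = MvPolynomial.coeff (∑ i ∈ T, Finsupp.single i 1) P := by
  rw [eval_zero', constantCoeff_eq, coeff_foldr_pderiv l hnd 0 (fun _ _ => rfl), zero_add, ← hl,
    List.sum_toFinset _ hnd]

theorem pderiv_eval_zero_eq_coeff (R : Type*) [CommRing R] (n : ℕ)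
    (P : MvPolynomial (Fin n) R) (hP : Multilinear P) (T : Finset (Fin n))
    (l : List (Fin n)) (hnd : l.Nodup) (hl : l.toFinset = T) :
    MvPolynomial.eval (fun _ => (0 : R))
        (l.foldr (fun i Q => MvPolynomial.pderiv i Q) P)
      = MvPolynomial.coeff (∑ i ∈ T, Finsupp.single i 1) P :=
  pderiv_eval_zero_eq_coeff_general R n P T l hnd hl
end

section
/- Let n t : ℕ. Then in MvPolynomial (Fin n) ℤ the polynomial t! • esymm (Fin n) ℤ t - ∏_{j = 0}^{t-1} (psum 1 - C j) lies in the ideal I generated by {X i ^ 2 - X i : i ∈ Fin n}. Equivalently, modulo I the elementary symmetric polynomial e_t is congruent to the falling-factorial polynomial (1/t!)·∏_{j<t}((∑_i X i) - j) in the single linear functional ∑_i X i. -/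
/-!
Modulo `I` the variables become idempotents `xᵢ`, and for idempotents
`e_t · (∑ᵢ xᵢ - t) = (t + 1) e_{t+1}`: multiplying a monomial `∏_{i ∈ A} xᵢ` with `|A| = t` by
`∑ᵢ xᵢ` gives `t` copies of itself plus one monomial `∏_{B} x` for each `B = A ∪ {i}`, and each
`(t + 1)`-set `B` arises from exactly `t + 1` pairs `(A, i)`. Induction on `t` then gives
`t! e_t = ∏_{j < t} (∑ᵢ xᵢ - j)`.
-/
open MvPolynomial Finset

section

variable {ι : Type*} [DecidableEq ι]

theorem Finset.sum_powersetCard_sum_sdiff_insert {M : Type*} [AddCommMonoid M]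
    (f : Finset ι → M) (s : Finset ι) (t : ℕ) :
    ∑ A ∈ s.powersetCard t, ∑ i ∈ s \ A, f (insert i A) =
      (t + 1) • ∑ B ∈ s.powersetCard (t + 1), f B := by
  have hreindex : ∑ A ∈ s.powersetCard t, ∑ i ∈ s \ A, f (insert i A) =
      ∑ B ∈ s.powersetCard (t + 1), ∑ _i ∈ B, f B := by
    rw [sum_sigma', sum_sigma']
    refine sum_nbij' (fun p => ⟨insert p.2 p.1, p.2⟩) (fun p => ⟨p.1.erase p.2, p.2⟩)
      ?_ ?_ ?_ ?_ fun _ _ => rfl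
    · rintro ⟨A, i⟩ h
      simp only [mem_sigma, mem_powersetCard, mem_sdiff] at h ⊢
      exact ⟨⟨insert_subset h.2.1 h.1.1, card_insert_of_notMem h.2.2 ▸ by rw [h.1.2]⟩,
        mem_insert_self _ _⟩
    · rintro ⟨B, i⟩ h
      simp only [mem_sigma, mem_powersetCard, mem_sdiff] at h ⊢
      exact ⟨⟨(erase_subset _ _).trans h.1.1, by rw [card_erase_of_mem h.2, h.1.2]; rfl⟩,
        h.1.1 h.2, notMem_erase _ _⟩
    · rintro ⟨A, i⟩ h
      simp only [mem_sigma, mem_sdiff] at h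
      simp [erase_insert h.2.2]
    · rintro ⟨B, i⟩ h
      simp only [mem_sigma] at h
      simp [insert_erase h.2]
  rw [hreindex, smul_sum]
  refine sum_congr rfl fun B hB => ?_
  rw [sum_const, (mem_powersetCard.mp hB).2]

variable {R : Type*} [CommRing R] {x : ι → R}

theorem Finset.prod_mul_sum_of_isIdempotentElem (hx : ∀ i, IsIdempotentElem (x i))
    {s A : Finset ι} (hA : A ⊆ s) :
    (∏ i ∈ A, x i) * ∑ i ∈ s, x i =
      #A • ∏ i ∈ A, x i + ∑ i ∈ s \ A, ∏ j ∈ insert i A, x j := by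
  have hmem : ∀ i ∈ A, (∏ j ∈ A, x j) * x i = ∏ j ∈ A, x j := fun i hi => by
    rw [← mul_prod_erase A x hi, mul_comm, ← mul_assoc, (hx i).eq]
  rw [mul_sum, ← sum_sdiff hA, add_comm, sum_congr rfl hmem, sum_const]
  congr 1
  exact sum_congr rfl fun i hi => by rw [prod_insert (mem_sdiff.mp hi).2, mul_comm]

theorem Finset.sum_powersetCard_prod_mul_sum_sub_of_isIdempotentElem
    (hx : ∀ i, IsIdempotentElem (x i)) (s : Finset ι) (t : ℕ) :
    (∑ A ∈ s.powersetCard t, ∏ i ∈ A, x i) * (∑ i ∈ s, x i - t) =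
      (t + 1) • ∑ B ∈ s.powersetCard (t + 1), ∏ i ∈ B, x i := by
  have hexpand : ∀ A ∈ s.powersetCard t, (∏ i ∈ A, x i) * ∑ i ∈ s, x i =
      t • ∏ i ∈ A, x i + ∑ i ∈ s \ A, ∏ j ∈ insert i A, x j := fun A hA => by
    obtain ⟨hAs, hcard⟩ := mem_powersetCard.mp hA
    rw [prod_mul_sum_of_isIdempotentElem hx hAs, hcard]
  rw [mul_sub, sum_mul, sum_congr rfl hexpand, sum_add_distrib,
    sum_powersetCard_sum_sdiff_insert (fun B => ∏ i ∈ B, x i), ← smul_sum, nsmul_eq_mul,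
    mul_comm]
  abel

theorem Finset.factorial_smul_sum_powersetCard_prod_of_isIdempotentElem
    (hx : ∀ i, IsIdempotentElem (x i)) (s : Finset ι) (t : ℕ) :
    t.factorial • ∑ A ∈ s.powersetCard t, ∏ i ∈ A, x i =
      ∏ j ∈ range t, (∑ i ∈ s, x i - j) := by
  induction t with
  | zero => simp
  | succ t ih =>
    rw [prod_range_succ, ← ih, smul_mul_assoc,
      sum_powersetCard_prod_mul_sum_sub_of_isIdempotentElem hx, smul_smul,
      Nat.factorial_succ, mul_comm]

end

theorem factorial_smul_esymm_sub_falling_factorial_mem_span (n t : ℕ) :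
    t.factorial • MvPolynomial.esymm (Fin n) ℤ t -
      ∏ j ∈ Finset.range t, (MvPolynomial.psum (Fin n) ℤ 1 - C (j : ℤ)) ∈
      Ideal.span (Set.range fun i : Fin n =>
        (X i : MvPolynomial (Fin n) ℤ) ^ 2 - X i) := by
  rw [← Ideal.Quotient.eq]
  set φ := Ideal.Quotient.mk (Ideal.span (Set.range fun i : Fin n =>
    (X i : MvPolynomial (Fin n) ℤ) ^ 2 - X i))
  have hidem : ∀ i, IsIdempotentElem (φ (X i)) := fun i => by
    rw [IsIdempotentElem, ← map_mul, ← sq, ← sub_eq_zero, ← map_sub,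
      Ideal.Quotient.eq_zero_iff_mem]
    exact Ideal.subset_span ⟨i, rfl⟩
  simpa [esymm, psum_one, map_prod, map_sum, map_nsmul] using
    factorial_smul_sum_powersetCard_prod_of_isIdempotentElem hidem univ t
end

section
/- (Newton's explicit formula for elementary symmetric polynomials.) Let n t : ℕ with 1 ≤ t ≤ n. Then in MvPolynomial (Fin n) ℚ: esymm (Fin n) ℚ t = (-1)^t · ∑ over all tuples (m₁,…,m_t) of natural numbers satisfying m₁ + 2·m₂ + ⋯ + t·m_t = t of ∏_{i=1}^{t} (-(psum i))^{m_i} / (m_i! · i^{m_i}), where the division is by the rational constant m_i! · i^{m_i}. -/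
/-!
Set `a j = -p_j`. Both `(-1)^k e_k` and the explicit sum `S_k` satisfy the recurrence
`k x_k = ∑_{j=1}^k a_j x_{k-j}`, and over a `ℚ`-algebra this recurrence determines `x_k` from
`x_0 = 1`. For `(-1)^k e_k` it is Newton's identity. For `S_k`, write `k = ∑ i m_i` in front of each
term: the part `i m_i` of a term of weight `k` is `a_i` times the term of weight `k - i` obtained by
lowering `m_i` by one, since `m_i! i^{m_i} = i m_i · (m_i - 1)! i^{m_i - 1}`.
-/

open MvPolynomial Finset

section NewtonRecurrence

variable {R : Type*} [CommRing R]

def NewtonRecurrence (a : ℕ → R) (N : ℕ) (e : ℕ → R) : Prop :=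
  ∀ k ≤ N, (k : R) * e k = ∑ j ∈ range k, a (j + 1) * e (k - (j + 1))

theorem NewtonRecurrence.unique [Algebra ℚ R] {a e e' : ℕ → R} {N : ℕ}
    (he : NewtonRecurrence a N e) (he' : NewtonRecurrence a N e') (h₀ : e 0 = e' 0) :
    ∀ k ≤ N, e k = e' k := by
  intro k
  induction k using Nat.strong_induction_on with
  | _ k ih =>
    intro hk
    rcases Nat.eq_zero_or_pos k with rfl | hk₀
    · exact h₀
    have hunit : IsUnit (k : R) := by
      simpa using (isUnit_iff_ne_zero.mpr (Nat.cast_ne_zero.mpr hk₀.ne') : IsUnit (k : ℚ)).map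
        (algebraMap ℚ R)
    refine hunit.mul_left_cancel ?_
    rw [he k hk, he' k hk]
    exact sum_congr rfl fun j hj => by
      rw [ih _ (by simp at hj; omega) (by omega)]

end NewtonRecurrence

theorem MvPolynomial.newtonRecurrence_neg_one_pow_mul_esymm (σ R : Type*) [Fintype σ]
    [CommRing R] (N : ℕ) :
    NewtonRecurrence (fun j => -psum σ R j) N (fun k => (-1) ^ k * esymm σ R k) := by
  intro k _
  have hsign : (-1 : MvPolynomial σ R) ^ k * (-1) ^ (k + 1) = -1 := by
    rw [← pow_add, ← add_assoc, pow_succ, Even.neg_one_pow ⟨k, rfl⟩, one_mul]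
  calc (k : MvPolynomial σ R) * ((-1) ^ k * esymm σ R k)
      = (-1) ^ k * ((-1) ^ (k + 1) *
          ∑ x ∈ antidiagonal k with x.1 < k, (-1) ^ x.1 * esymm σ R x.1 * psum σ R x.2) := by
        rw [← mul_esymm_eq_sum]; ring
    _ = (-1) ^ k * ((-1) ^ (k + 1) *
          ∑ j ∈ range k, (-1) ^ (k - (j + 1)) * esymm σ R (k - (j + 1)) * psum σ R (j + 1)) := by
        rw [sum_filter, ← Nat.sum_antidiagonal_swap, Nat.sum_antidiagonal_eq_sum_range_succ_mk,
          sum_range_succ']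
        simp only [Prod.swap_prod_mk, Nat.sub_zero, lt_irrefl, if_false, add_zero]
        congr 2
        exact sum_congr rfl fun j hj => if_pos (by simp at hj; omega)
    _ = ∑ j ∈ range k, -psum σ R (j + 1) * ((-1) ^ (k - (j + 1)) * esymm σ R (k - (j + 1))) := by
        rw [mul_sum, mul_sum]
        refine sum_congr rfl fun j _ => ?_
        linear_combination
          ((-1) ^ (k - (j + 1)) * esymm σ R (k - (j + 1)) * psum σ R (j + 1)) * hsign

namespace PartitionTuple

variable {t : ℕ}

def weight (m : Fin t → ℕ) : ℕ := ∑ i, (i.1 + 1) * m i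

theorem weight_add (m m' : Fin t → ℕ) : weight (m + m') = weight m + weight m' := by
  simp only [weight, Pi.add_apply, mul_add, sum_add_distrib]

theorem weight_single (i : Fin t) : weight (Pi.single i 1) = i.1 + 1 := by
  simp [weight, Pi.single_apply]

theorem mul_le_weight (m : Fin t → ℕ) (i : Fin t) : (i.1 + 1) * m i ≤ weight m :=
  single_le_sum (f := fun j : Fin t => (j.1 + 1) * m j) (fun _ _ => Nat.zero_le _) (mem_univ i)

variable (t) in
def ofWeight (k : ℕ) : Finset (Fin t → ℕ) :=
  (Fintype.piFinset fun _ => range (k + 1)).filter fun m => weight m = k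

theorem mem_ofWeight {k : ℕ} {m : Fin t → ℕ} : m ∈ ofWeight t k ↔ weight m = k := by
  refine ⟨fun h => (mem_filter.mp h).2, fun h => mem_filter.mpr ⟨?_, h⟩⟩
  refine Fintype.mem_piFinset.mpr fun i => mem_range.mpr ?_
  have := mul_le_weight m i
  nlinarith

theorem ofWeight_zero : ofWeight t 0 = {0} := by
  ext m
  simp [mem_ofWeight, weight, sum_eq_zero_iff, funext_iff]

end PartitionTuple

section NewtonSum

open PartitionTuple

variable {R : Type*} [CommRing R] [Algebra ℚ R]

noncomputable def newtonFactor (d c : ℕ) (x : R) : R :=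
  algebraMap ℚ R (((c.factorial : ℚ) * (d : ℚ) ^ c)⁻¹) * x ^ c

theorem natCast_mul_newtonFactor_succ {d : ℕ} (hd : d ≠ 0) (c : ℕ) (x : R) :
    ((d * (c + 1) : ℕ) : R) * newtonFactor d (c + 1) x = x * newtonFactor d c x := by
  have hcoeff : ((d * (c + 1) : ℕ) : ℚ) * (((c + 1).factorial : ℚ) * (d : ℚ) ^ (c + 1))⁻¹ =
      ((c.factorial : ℚ) * (d : ℚ) ^ c)⁻¹ := by
    rw [Nat.factorial_succ]
    field_simp
    push_cast
    ring
  rw [newtonFactor, newtonFactor, ← map_natCast (algebraMap ℚ R), ← mul_assoc, ← map_mul, hcoeff]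
  ring

noncomputable def newtonTerm (a : ℕ → R) {t : ℕ} (m : Fin t → ℕ) : R :=
  ∏ i : Fin t, newtonFactor (i.1 + 1) (m i) (a (i.1 + 1))

theorem natCast_mul_newtonTerm_add_single (a : ℕ → R) {t : ℕ} (m : Fin t → ℕ) (i : Fin t) :
    (((i.1 + 1) * (m i + 1) : ℕ) : R) * newtonTerm a (m + Pi.single i 1) =
      a (i.1 + 1) * newtonTerm a m := by
  have hrest :
      ∏ j ∈ {i}ᶜ, newtonFactor (j.1 + 1) ((m + Pi.single i 1 : Fin t → ℕ) j) (a (j.1 + 1)) =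
      ∏ j ∈ {i}ᶜ, newtonFactor (j.1 + 1) (m j) (a (j.1 + 1)) :=
    prod_congr rfl fun j hj => by
      rw [Pi.add_apply, Pi.single_eq_of_ne (by simpa using hj), add_zero]
  rw [newtonTerm, newtonTerm, Fintype.prod_eq_mul_prod_compl i, Fintype.prod_eq_mul_prod_compl i,
    hrest, Pi.add_apply, Pi.single_eq_same, ← mul_assoc,
    natCast_mul_newtonFactor_succ (Nat.succ_ne_zero _), mul_assoc]

variable (a : ℕ → R) (t : ℕ)

noncomputable def newtonSum (k : ℕ) : R :=
  ∑ m ∈ ofWeight t k, newtonTerm a m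

theorem newtonSum_zero : newtonSum a t 0 = 1 := by
  simp [newtonSum, ofWeight_zero, newtonTerm, newtonFactor]

theorem sum_natCast_mul_newtonTerm_of_lt {k : ℕ} {i : Fin t} (hk : k < i.1 + 1) :
    ∑ m ∈ ofWeight t k, (((i.1 + 1) * m i : ℕ) : R) * newtonTerm a m = 0 := by
  refine sum_eq_zero fun m hm => ?_
  have hmi : (i.1 + 1) * m i < (i.1 + 1) * 1 := by
    have := mul_le_weight m i
    rw [mem_ofWeight.mp hm] at this
    omega
  rw [Nat.lt_one_iff.mp (Nat.lt_of_mul_lt_mul_left hmi), mul_zero, Nat.cast_zero, zero_mul]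

theorem sum_natCast_mul_newtonTerm_add (k : ℕ) (i : Fin t) :
    ∑ m ∈ ofWeight t (k + (i.1 + 1)), (((i.1 + 1) * m i : ℕ) : R) * newtonTerm a m =
      a (i.1 + 1) * newtonSum a t k := by
  set f : (Fin t → ℕ) → R := fun m => (((i.1 + 1) * m i : ℕ) : R) * newtonTerm a m
  have hshift : ∀ m, f (m + Pi.single i 1) = a (i.1 + 1) * newtonTerm a m := fun m => by
    simpa [f] using natCast_mul_newtonTerm_add_single a m i
  have hmaps : (ofWeight t k).image (· + Pi.single i 1) ⊆ ofWeight t (k + (i.1 + 1)) := by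
    simp only [subset_iff, mem_image, mem_ofWeight]
    rintro _ ⟨m, rfl, rfl⟩
    rw [weight_add, weight_single]
  have hvanish : ∀ m ∈ ofWeight t (k + (i.1 + 1)),
      m ∉ (ofWeight t k).image (· + Pi.single i 1) → f m = 0 := by
    intro m hm hnot
    suffices m i = 0 by simp [f, this]
    by_contra hmi
    have hm' : m - Pi.single i 1 + Pi.single i 1 = m := by
      ext j
      rcases eq_or_ne j i with rfl | hj
      · simp only [Pi.add_apply, Pi.sub_apply, Pi.single_eq_same]
        omega
      · simp only [Pi.add_apply, Pi.sub_apply, Pi.single_eq_of_ne hj, tsub_zero, add_zero]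
    refine hnot (mem_image.mpr ⟨m - Pi.single i 1, mem_ofWeight.mpr ?_, hm'⟩)
    have := congrArg weight hm'
    rw [weight_add, weight_single, mem_ofWeight.mp hm] at this
    omega
  rw [newtonSum, mul_sum, ← sum_subset hmaps hvanish,
    sum_image fun _ _ _ _ h => add_right_cancel h]
  exact sum_congr rfl fun m _ => hshift m

theorem newtonRecurrence_newtonSum : NewtonRecurrence a t (newtonSum a t) := by
  intro k hk
  have hweight : ∀ m ∈ ofWeight t k, (k : R) * newtonTerm a m =
      ∑ i : Fin t, (((i.1 + 1) * m i : ℕ) : R) * newtonTerm a m := fun m hm => by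
    rw [← sum_mul, ← Nat.cast_sum, ← weight, mem_ofWeight.mp hm]
  calc (k : R) * newtonSum a t k
      = ∑ i : Fin t, ∑ m ∈ ofWeight t k, (((i.1 + 1) * m i : ℕ) : R) * newtonTerm a m := by
        rw [newtonSum, mul_sum, sum_congr rfl hweight, sum_comm]
    _ = ∑ i : Fin t, if i.1 < k then a (i.1 + 1) * newtonSum a t (k - (i.1 + 1)) else 0 := by
        refine sum_congr rfl fun i _ => ?_
        split_ifs with hik
        · obtain ⟨l, rfl⟩ := Nat.exists_eq_add_of_le' (Nat.succ_le_of_lt hik)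
          rw [sum_natCast_mul_newtonTerm_add, Nat.add_sub_cancel]
        · exact sum_natCast_mul_newtonTerm_of_lt a t (by omega)
    _ = ∑ j ∈ range t, if j < k then a (j + 1) * newtonSum a t (k - (j + 1)) else 0 :=
        Fin.sum_univ_eq_sum_range
          (fun j => if j < k then a (j + 1) * newtonSum a t (k - (j + 1)) else 0) t
    _ = ∑ j ∈ range k, a (j + 1) * newtonSum a t (k - (j + 1)) := by
        rw [← sum_filter]
        congr 1
        ext j
        simp only [mem_filter, mem_range]
        omega

end NewtonSum

theorem newton_explicit_formula_esymm_general (n t : ℕ) :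
    MvPolynomial.esymm (Fin n) ℚ t =
      (-1 : MvPolynomial (Fin n) ℚ) ^ t *
        ∑ m ∈ (Fintype.piFinset fun _ : Fin t => Finset.range (t + 1)).filter
            (fun m : Fin t → ℕ => ∑ i : Fin t, (i.1 + 1) * m i = t),
          ∏ i : Fin t,
            C ((((m i).factorial : ℚ) * ((i.1 + 1 : ℕ) : ℚ) ^ (m i))⁻¹) *
              (-(MvPolynomial.psum (Fin n) ℚ (i.1 + 1))) ^ (m i) := by
  have hsigned : (-1) ^ t * esymm (Fin n) ℚ t = newtonSum (fun j => -psum (Fin n) ℚ j) t t :=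
    (newtonRecurrence_neg_one_pow_mul_esymm (Fin n) ℚ t).unique (newtonRecurrence_newtonSum _ t)
      (by simp [newtonSum_zero]) t le_rfl
  calc esymm (Fin n) ℚ t = (-1) ^ t * ((-1) ^ t * esymm (Fin n) ℚ t) := by
        rw [← mul_assoc, ← pow_add, Even.neg_one_pow ⟨t, rfl⟩, one_mul]
    _ = _ := by
        -- `algebraMap ℚ (MvPolynomial (Fin n) ℚ)` is `C` by definition
        rw [hsigned]
        rfl

theorem newton_explicit_formula_esymm (n t : ℕ) (ht : 1 ≤ t) (htn : t ≤ n) :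
    MvPolynomial.esymm (Fin n) ℚ t =
      (-1 : MvPolynomial (Fin n) ℚ) ^ t *
        ∑ m ∈ (Fintype.piFinset fun _ : Fin t => Finset.range (t + 1)).filter
            (fun m : Fin t → ℕ => ∑ i : Fin t, (i.1 + 1) * m i = t),
          ∏ i : Fin t,
            C ((((m i).factorial : ℚ) * ((i.1 + 1 : ℕ) : ℚ) ^ (m i))⁻¹) *
              (-(MvPolynomial.psum (Fin n) ℚ (i.1 + 1))) ^ (m i) :=
  newton_explicit_formula_esymm_general n t
end

section
/- Let R be a commutative ring, n : ℕ, and A : Matrix (Fin n) (Fin n) R. In MvPolynomial (Fin n) R, the coefficient of the full squarefree monomial X 0 · X 1 ⋯ X (n-1) (exponent vector identically 1) in the product ∏_{i : Fin n} (∑_{j : Fin n} C (A i j) * X j) equals the permanent of A, i.e., ∑_{σ : Equiv.Perm (Fin n)} ∏_{i : Fin n} A i (σ i). -/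
/-!
Expanding the product gives, for each `g : Fin n → Fin n`, the term `∏ i, A i (g i)` times the
monomial whose exponent at `j` is the size of the fibre `g⁻¹ {j}`. That exponent is identically
`1` exactly when `g` is a permutation.
-/

open MvPolynomial Finset

theorem Finsupp.sum_univ_single_one_apply {ι σ : Type*} [Fintype ι] [DecidableEq σ]
    (g : ι → σ) (j : σ) : (∑ i, Finsupp.single (g i) 1 : σ →₀ ℕ) j = #{i | g i = j} := by
  simp only [Finsupp.coe_finsetSum, Finset.sum_apply, Finsupp.single_apply, Finset.sum_boole,
    Nat.cast_id]

theorem Finsupp.sum_univ_single_one_eq_iff_bijective {ι : Type*} [Fintype ι] (g : ι → ι) :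
    ∑ i, Finsupp.single (g i) (1 : ℕ) = ∑ i, Finsupp.single i 1 ↔ Function.Bijective g := by
  classical
  refine ⟨fun h => ?_, fun hg => Fintype.sum_bijective g hg _ _ fun _ => rfl⟩
  refine Finite.injective_iff_bijective.mp fun a b hab => ?_
  have hfiber := Finsupp.sum_univ_single_one_apply g (g a)
  simp only [h, Finsupp.coe_finsetSum, Finset.sum_apply, Finsupp.single_apply, Finset.sum_ite_eq',
    mem_univ, if_true] at hfiber
  exact card_le_one.mp hfiber.ge a (by simp) b (by simp [hab])

theorem MvPolynomial.prod_C_mul_X {R σ ι : Type*} [CommSemiring R] (s : Finset ι)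
    (a : ι → R) (g : ι → σ) :
    ∏ i ∈ s, C (a i) * (X (g i) : MvPolynomial σ R)
      = monomial (∑ i ∈ s, Finsupp.single (g i) 1) (∏ i ∈ s, a i) := by
  simp only [C_mul_X_eq_monomial, monomial_sum_prod]

theorem MvPolynomial.coeff_prod_sum_C_mul_X {R σ ι : Type*} [CommSemiring R] [Fintype ι]
    [DecidableEq ι] [Fintype σ] [DecidableEq σ] (A : Matrix ι σ R) (d : σ →₀ ℕ) :
    coeff d (∏ i, ∑ j, C (A i j) * (X j : MvPolynomial σ R))
      = ∑ g : ι → σ, if ∑ i, Finsupp.single (g i) 1 = d then ∏ i, A i (g i) else 0 := by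
  simp only [Finset.prod_univ_sum, Fintype.piFinset_univ, prod_C_mul_X, coeff_sum,
    coeff_monomial]

theorem Fintype.sum_ite_bijective {M α β : Type*} [AddCommMonoid M] [Fintype (α → β)]
    [Fintype (α ≃ β)] [DecidablePred (Function.Bijective : (α → β) → Prop)]
    (F : (α → β) → M) :
    ∑ g, (if Function.Bijective g then F g else 0) = ∑ e : α ≃ β, F e := by
  rw [← Finset.sum_filter, Finset.sum_subtype _ fun _ => Finset.mem_filter_univ _,
    ← Fintype.sum_equiv Equiv.bijectiveEquiv.symm _ _ fun _ => rfl]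
  rfl

theorem coeff_full_squarefree_monomial_eq_permanent (R : Type*) [CommRing R] (n : ℕ)
    (A : Matrix (Fin n) (Fin n) R) :
    MvPolynomial.coeff (∑ j : Fin n, Finsupp.single j 1)
        (∏ i : Fin n, ∑ j : Fin n, C (A i j) * (X j : MvPolynomial (Fin n) R))
      = ∑ σ : Equiv.Perm (Fin n), ∏ i : Fin n, A i (σ i) := by
  simp only [coeff_prod_sum_C_mul_X, Finsupp.sum_univ_single_one_eq_iff_bijective]
  exact Fintype.sum_ite_bijective _
end

section
/- (Determinant via Grassmann matrix representation.) Let n : ℕ, A : Matrix (Fin n) (Fin n) ℤ, and for m : Fin n define θ_m : Matrix (Fin n → Bool) (Fin n → Bool) ℤ by θ_m a b = (-1)^(card {k : Fin n | k < m ∧ a k = true}) if a m = true, b m = false, and a k = b k for all k ≠ m, and θ_m a b = 0 otherwise. Form the ordered matrix product M := L_0 * L_1 * ⋯ * L_{n-1}, where L_i := ∑_{j : Fin n} (A i j) • θ_j. Then the entry of M at row index (fun _ => true) and column index (fun _ => false) equals det A. -/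
/-- The Jordan–Wigner matrix representation of the `m`-th Grassmann generator:
a matrix indexed by `Fin n → Bool`. -/
def theta (n : ℕ) (m : Fin n) : Matrix (Fin n → Bool) (Fin n → Bool) ℤ :=
  fun a b =>
    if a m = true ∧ b m = false ∧ ∀ k : Fin n, k ≠ m → a k = b k then
      (-1 : ℤ) ^ (Finset.univ.filter (fun k : Fin n => k < m ∧ a k = true)).card
    else 0

/-!
Identify `a : Fin n → Bool` with the set `S = {k | a k}`. Then `θ_j` sends `S ∋ j` to `S \ {j}`
with the sign `(-1)^#{k ∈ S | k < j}`, which is `(-1)^q` when `j` is the `q`-th element of `S`.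
Hence the `(S, ∅)` entry of a product of `m` linear combinations of the `θ_j` satisfies, by
induction on `m`, the Laplace expansion along the first row of the minor of their coefficient
rows on the columns `S`, so it equals that minor; for `S = univ` the minor is `det A`.
-/

open Finset

namespace Finset

variable {α : Type*} [LinearOrder α]

theorem orderEmbOfFin_erase_orderEmbOfFin {m : ℕ} (S : Finset α) (h : #S = m + 1)
    (q : Fin (m + 1)) (h' : #(S.erase (S.orderEmbOfFin h q)) = m) (r : Fin m) :
    (S.erase (S.orderEmbOfFin h q)).orderEmbOfFin h' r = S.orderEmbOfFin h (q.succAbove r) := by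
  refine congrFun (orderEmbOfFin_unique h' (fun r => ?_)
    ((S.orderEmbOfFin h).strictMono.comp (Fin.strictMono_succAbove q))).symm r
  exact mem_erase.mpr
    ⟨fun hr => Fin.succAbove_ne q r ((S.orderEmbOfFin h).injective hr), orderEmbOfFin_mem _ _ _⟩

theorem card_filter_lt_orderEmbOfFin {m : ℕ} (S : Finset α) (h : #S = m) (q : Fin m) :
    #(S.filter (· < S.orderEmbOfFin h q)) = q := by
  have : S.filter (· < S.orderEmbOfFin h q) = (Iio q).map (S.orderEmbOfFin h).toEmbedding := by
    ext x
    constructor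
    · intro hx
      obtain ⟨hxS, hlt⟩ := mem_filter.1 hx
      obtain ⟨r, rfl⟩ : x ∈ Set.range (S.orderEmbOfFin h) := by simpa using hxS
      simpa using hlt
    · simp only [mem_map, mem_Iio, mem_filter, RelEmbedding.coe_toEmbedding]
      rintro ⟨r, hr, rfl⟩
      exact ⟨orderEmbOfFin_mem S h r, (S.orderEmbOfFin h).lt_iff_lt.mpr hr⟩
  rw [this, card_map, Fin.card_Iio]

theorem sum_orderEmbOfFin {β : Type*} [AddCommMonoid β] {m : ℕ} (S : Finset α) (h : #S = m)
    (f : α → β) : ∑ q, f (S.orderEmbOfFin h q) = ∑ x ∈ S, f x := by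
  conv_rhs => rw [← map_orderEmbOfFin_univ S h]
  rw [sum_map]
  rfl

end Finset

theorem theta_mul_apply {n : ℕ} (j : Fin n) (S : Finset (Fin n))
    (P : Matrix (Fin n → Bool) (Fin n → Bool) ℤ) (b : Fin n → Bool) :
    (theta n j * P) (fun k => decide (k ∈ S)) b =
      if j ∈ S then (-1) ^ #(S.filter (· < j)) * P (fun k => decide (k ∈ S.erase j)) b
      else 0 := by
  rw [Matrix.mul_apply]
  by_cases hj : j ∈ S
  · rw [if_pos hj, sum_eq_single (fun k => decide (k ∈ S.erase j))]
    · have hsign : univ.filter (fun k => k < j ∧ decide (k ∈ S) = true) = S.filter (· < j) := by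
        ext k
        simp [and_comm]
      rw [theta, if_pos (by simp +contextual [hj]), hsign]
    · intro c _ hc
      rw [theta, if_neg, zero_mul]
      rintro ⟨-, hcj, hagree⟩
      refine hc (funext fun k => ?_)
      by_cases hk : k = j
      · simp [hk, hcj]
      · simp [hk, ← hagree k hk]
    · simp
  · rw [if_neg hj]
    refine sum_eq_zero fun c _ => ?_
    rw [theta, if_neg (by simp [hj]), zero_mul]

def grassmannLinear (n : ℕ) (v : Fin n → ℤ) : Matrix (Fin n → Bool) (Fin n → Bool) ℤ :=
  ∑ j, v j • theta n j

theorem grassmannLinear_mul_apply {n : ℕ} (v : Fin n → ℤ) (S : Finset (Fin n))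
    (P : Matrix (Fin n → Bool) (Fin n → Bool) ℤ) (b : Fin n → Bool) :
    (grassmannLinear n v * P) (fun k => decide (k ∈ S)) b =
      ∑ j ∈ S, (-1) ^ #(S.filter (· < j)) * v j * P (fun k => decide (k ∈ S.erase j)) b := by
  simp only [grassmannLinear, sum_mul, Matrix.smul_mul, Matrix.sum_apply, Matrix.smul_apply,
    theta_mul_apply, smul_eq_mul, mul_ite, mul_zero]
  rw [← sum_filter, filter_mem_eq_inter, univ_inter]
  refine sum_congr rfl fun j _ => ?_
  ring

theorem prod_grassmannLinear_apply {m n : ℕ} (v : Fin m → Fin n → ℤ) (S : Finset (Fin n)) :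
    (List.ofFn fun i => grassmannLinear n (v i)).prod (fun k => decide (k ∈ S)) (fun _ => false) =
      if h : #S = m then (Matrix.of fun p q => v p (S.orderEmbOfFin h q)).det else 0 := by
  induction m generalizing S with
  | zero =>
    simp [Matrix.one_apply, funext_iff, eq_empty_iff_forall_notMem]
  | succ m ih =>
    rw [List.ofFn_succ, List.prod_cons, grassmannLinear_mul_apply]
    simp only [ih]
    split_ifs with hS
    · rw [Matrix.det_succ_row_zero, ← sum_orderEmbOfFin S hS]
      refine sum_congr rfl fun q _ => ?_
      have hcard : #(S.erase (S.orderEmbOfFin hS q)) = m := by simp [card_erase_of_mem, hS]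
      rw [dif_pos hcard, card_filter_lt_orderEmbOfFin]
      simp only [orderEmbOfFin_erase_orderEmbOfFin]
      rfl
    · refine sum_eq_zero fun j hj => ?_
      rw [dif_neg, mul_zero]
      have hS_pos := card_pos.mpr ⟨j, hj⟩
      rw [card_erase_of_mem hj]
      omega

theorem det_via_grassmann (n : ℕ) (A : Matrix (Fin n) (Fin n) ℤ) :
    (((List.finRange n).map
        (fun i => ∑ j : Fin n, A i j • theta n j)).prod)
      (fun _ => true) (fun _ => false) = A.det := by
  have hrows : (List.finRange n).map (fun i => ∑ j : Fin n, A i j • theta n j) =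
      List.ofFn fun i => grassmannLinear n (A i) :=
    List.ofFn_eq_map.symm
  have hall : (fun _ : Fin n => true) = fun k => decide (k ∈ (univ : Finset (Fin n))) := by simp
  have hid : ⇑(univ.orderEmbOfFin (card_fin n)) = id :=
    (orderEmbOfFin_unique _ (fun _ => mem_univ _) strictMono_id).symm
  rw [hrows, hall, prod_grassmannLinear_apply (v := A), dif_pos (card_fin n), hid]
  rfl
end

section
/- Let n s : ℕ with s ≤ n. There exist μ : ℂ and γ : Fin n → ℂ such that the polynomial ∑_{t=s}^{n} esymm (Fin n) ℂ t - μ • ∏_{j : Fin n} (C (γ j) + ∑_{i : Fin n} X i) lies in the ideal I generated by {X i ^ 2 - X i : i ∈ Fin n}. That is, modulo I the multilinear polynomial listing all subsets of size at least s factors completely into n linear factors in the single linear functional ∑_i X i. -/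
/-!
By the Combinatorial Nullstellensatz for the grids `{0, 1}^n`, a polynomial lies in the ideal
generated by the `X i ^ 2 - X i` as soon as it vanishes on the Boolean cube. At a Boolean point
with `k` coordinates equal to `1`, `∑ i, X i` takes the value `k` and `esymm t` the value
`k.choose t`, so the left side becomes `g k` for the degree-`n` polynomial
`g = ∑ t ∈ Icc s n, X.choose t`. Over `ℂ`, `g` splits as `μ * ∏ j, (X + γ j)`.
-/

open Finset
open scoped Nat

namespace Polynomial

theorem exists_eval_eq_mul_prod_add {K : Type*} [Field K] [IsAlgClosed K] {p : K[X]} {n : ℕ}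
    (hp : p.natDegree = n) : ∃ (μ : K) (γ : Fin n → K), ∀ z, p.eval z = μ * ∏ j, (γ j + z) := by
  obtain ⟨l, hroots⟩ : ∃ l : List K, (l : Multiset K) = p.roots := ⟨_, Multiset.coe_toList _⟩
  have hl : n = l.length := by
    rw [← hp, ← IsAlgClosed.card_roots_eq_natDegree, ← hroots, Multiset.coe_card]
  refine ⟨p.leadingCoeff, fun j => -l[j.cast hl], fun z => ?_⟩
  rw [(IsAlgClosed.splits p).eval_eq_prod_roots, ← hroots, Multiset.map_coe, Multiset.prod_coe,
    ← Fin.prod_univ_fun_getElem, ← Fin.prod_congr' _ hl]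
  simp only [neg_add_eq_sub]
  rfl

noncomputable def binomialTailPoly (K : Type*) [Field K] (s n : ℕ) : K[X] :=
  ∑ t ∈ Icc s n, C (t ! : K)⁻¹ * descPochhammer K t

variable {K : Type*} [Field K] [CharZero K]

theorem eval_natCast_binomialTailPoly (s n k : ℕ) :
    (binomialTailPoly K s n).eval (k : K) = ∑ t ∈ Icc s n, (k.choose t : K) := by
  simp only [binomialTailPoly, eval_finsetSum, eval_mul, eval_C,
    descPochhammer_eval_eq_descFactorial, Nat.descFactorial_eq_factorial_mul_choose, Nat.cast_mul]
  refine sum_congr rfl fun t _ => ?_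
  rw [inv_mul_cancel_left₀ (by exact_mod_cast t.factorial_ne_zero)]

theorem natDegree_binomialTailPoly {s n : ℕ} (hs : s ≤ n) :
    (binomialTailPoly K s n).natDegree = n := by
  have hdeg : ∀ t, (C (t ! : K)⁻¹ * descPochhammer K t).natDegree ≤ t := fun t =>
    (natDegree_C_mul_le _ _).trans (descPochhammer_natDegree K t).le
  have hlead : (descPochhammer K n).coeff n = 1 := by
    simpa using (monic_descPochhammer K n).coeff_natDegree
  refine natDegree_eq_of_le_of_coeff_ne_zero
    (natDegree_sum_le_of_forall_le _ _ fun t ht => (hdeg t).trans (mem_Icc.mp ht).2) ?_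
  rw [binomialTailPoly, finsetSum_coeff, sum_eq_single_of_mem n (right_mem_Icc.mpr hs)
    fun t ht htn => coeff_eq_zero_of_natDegree_lt ((hdeg t).trans_lt
      (lt_of_le_of_ne (mem_Icc.mp ht).2 htn)), coeff_C_mul, hlead, mul_one]
  exact inv_ne_zero (by exact_mod_cast n.factorial_ne_zero)

end Polynomial

namespace MvPolynomial

theorem mem_span_X_sq_sub_X_of_eval_eq_zero {R σ : Type*} [CommRing R] [IsDomain R] [Finite σ]
    (f : MvPolynomial σ R) (hf : ∀ x : σ → R, (∀ i, x i = 0 ∨ x i = 1) → eval x f = 0) :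
    f ∈ Ideal.span (Set.range fun i : σ => (X i : MvPolynomial σ R) ^ 2 - X i) := by
  classical
  obtain ⟨h, -, rfl⟩ := combinatorial_nullstellensatz_exists_linearCombination
    (fun _ => {0, 1}) (fun _ => insert_nonempty _ _) f (fun x hx => hf x (by simpa using hx))
  rw [Finsupp.linearCombination_apply]
  refine Ideal.sum_mem _ fun i _ => Ideal.mul_mem_left _ _ (Ideal.subset_span ⟨i, ?_⟩)
  simp [sq, mul_sub]

theorem eval_indicator_esymm {σ R : Type*} [CommSemiring R] [Fintype σ] [DecidableEq σ]
    (S : Finset σ) (t : ℕ) :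
    eval (fun i => if i ∈ S then 1 else 0) (esymm σ R t) = (#S).choose t := by
  simp only [esymm, map_sum, map_prod, eval_X, prod_boole]
  rw [← card_powersetCard]
  convert (natCast_card_filter (R := R) (· ⊆ S) (powersetCard t univ)).symm using 3
  · rfl
  · ext A
    simp [and_comm]

end MvPolynomial

open MvPolynomial

theorem sum_esymm_ge_factors_modulo_boolean_relations (n s : ℕ) (hs : s ≤ n) :
    ∃ (μ : ℂ) (γ : Fin n → ℂ),
      (∑ t ∈ Finset.Icc s n, MvPolynomial.esymm (Fin n) ℂ t) -
        μ • ∏ j : Fin n, (C (γ j) + ∑ i : Fin n, (X i : MvPolynomial (Fin n) ℂ)) ∈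
        Ideal.span (Set.range fun i : Fin n =>
          (X i : MvPolynomial (Fin n) ℂ) ^ 2 - X i) := by
  obtain ⟨μ, γ, hfactor⟩ :=
    Polynomial.exists_eval_eq_mul_prod_add (Polynomial.natDegree_binomialTailPoly (K := ℂ) hs)
  refine ⟨μ, γ, mem_span_X_sq_sub_X_of_eval_eq_zero _ fun x hx => ?_⟩
  obtain ⟨S, rfl⟩ : ∃ S : Finset (Fin n), x = fun i => if i ∈ S then 1 else 0 :=
    ⟨({i | x i = 1} : Finset _), funext fun i => by rcases hx i with h | h <;> simp [h]⟩
  simp only [map_sub, map_sum, smul_eq_C_mul, map_mul, map_prod, map_add, eval_C, eval_X,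
    eval_indicator_esymm, sum_boole, filter_mem_eq_of_subset, subset_univ]
  rw [← Polynomial.eval_natCast_binomialTailPoly, hfactor, sub_self]
end
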